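/- arXiv:1612.00982 — 6 statements merged into one kernel-verified Lean document; each statement's English description precedes it below -/
import Mathlib

section
/- For every natural number k ≥ 2 and every triangular set Y with k levels, letting Y' be the triangular set obtained by removing the last level of Y, one has |△_{k-1}(Y)| = 1 + k·|△_{k-2}(Y')|. -/
/-- A triangular set with `k` levels: a subset of `ℕ` of cardinality `T_k`
whose increasing enumeration is arranged in levels of sizes `1, 2, ..., k`.
It is represented by its levels: the `j`-th level has `j + 1` elements and
all elements of earlier levels are smaller than those of later levels. -/
structure TriSet (k : ℕ) where
  level : Fin k → Finset ℕ
  card_level : ∀ j, (level j).card = (j : ℕ) + 1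
  ordered : ∀ i j : Fin k, i < j → ∀ a ∈ level i, ∀ b ∈ level j, a < b

/-- `X ≤ Y` for triangular sets: `X ⊆ Y` and every level of `X` is contained
in a single distinct level of `Y`, with the levels appearing in increasing order. -/
def TriSet.le {k n : ℕ} (X : TriSet k) (Y : TriSet n) : Prop :=
  ∃ f : Fin k → Fin n, StrictMono f ∧ ∀ j, X.level j ⊆ Y.level (f j)


/-- The triangular set obtained by removing the last level. -/
def TriSet.init {k : ℕ} (Y : TriSet k) : TriSet (k - 1) where
  level j := Y.level (Fin.castLE (Nat.sub_le k 1) j)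
  card_level j := by simpa using Y.card_level (Fin.castLE (Nat.sub_le k 1) j)
  ordered i j h a ha b hb :=
    Y.ordered (Fin.castLE (Nat.sub_le k 1) i) (Fin.castLE (Nat.sub_le k 1) j) h a ha b hb

/-! ### Auxiliary lemmas -/

lemma TriSet.ext' {n : ℕ} {X Y : TriSet n} (h : ∀ j, X.level j = Y.level j) : X = Y := by
  cases X; cases Y
  congr 1
  exact funext h

lemma TriSet.level_nonempty {n : ℕ} (X : TriSet n) (j : Fin n) : (X.level j).Nonempty := by
  rw [← Finset.card_pos, X.card_level]; omega

lemma TriSet.level_eq_of_mem {n : ℕ} (X : TriSet n) {i j : Fin n} {a : ℕ}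
    (ha : a ∈ X.level i) (hb : a ∈ X.level j) : i = j := by
  rcases lt_trichotomy i j with h | h | h
  · exact absurd (X.ordered i j h a ha a hb) (lt_irrefl a)
  · exact h
  · exact absurd (X.ordered j i h a hb a ha) (lt_irrefl a)

lemma strictMono_fin_le {a b : ℕ} {f : Fin a → Fin b} (hf : StrictMono f) :
    ∀ j : Fin a, (j : ℕ) ≤ (f j : ℕ) := by
  rintro ⟨i, hi⟩
  induction i with
  | zero => exact Nat.zero_le _
  | succ n ih =>
    have hn : n < a := by omega
    have h3 : n ≤ (f ⟨n, hn⟩ : ℕ) := ih hn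
    have h2 : (f ⟨n, hn⟩ : ℕ) < (f ⟨n + 1, hi⟩ : ℕ) :=
      Fin.lt_def.mp (hf (Fin.mk_lt_mk.mpr (Nat.lt_succ_self n)))
    show n + 1 ≤ (f ⟨n + 1, hi⟩ : ℕ)
    omega

lemma strictMono_fin_id {n : ℕ} {g : Fin n → Fin n} (hg : StrictMono g) (j : Fin n) :
    g j = j := by
  have h1 := strictMono_fin_le hg j
  have hrev : StrictMono (fun i : Fin n => (g i.rev).rev) := by
    intro i i' hii
    simpa using hg (by simpa using hii : i'.rev < i.rev)
  have h2 := strictMono_fin_le hrev j.rev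
  simp only [Fin.rev_rev] at h2
  rw [Fin.val_rev, Fin.val_rev] at h2
  have := j.isLt; have := (g j).isLt
  exact Fin.ext (by omega)

instance triSetLeFinite {p n : ℕ} {Z : TriSet n} : Finite {X : TriSet p // X.le Z} := by
  classical
  set U : Finset ℕ := Finset.univ.biUnion Z.level with hU
  apply Finite.of_injective
    (f := fun X : {X : TriSet p // X.le Z} =>
      (fun j => (⟨X.1.level j, by
        obtain ⟨f, hf, hsub⟩ := X.2
        exact Finset.mem_powerset.mpr
          ((hsub j).trans (Finset.subset_biUnion_of_mem Z.level (Finset.mem_univ (f j))))⟩ :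
        {S // S ∈ U.powerset})))
  intro X X' h
  apply Subtype.ext; apply TriSet.ext'
  intro j
  exact congrArg Subtype.val (congrFun h j)

lemma le_init_of_top {m : ℕ} {Y : TriSet (m + 2)} {X : TriSet (m + 1)} (hle : X.le Y)
    (hP : X.level (Fin.last m) ⊆ Y.level (Fin.last (m + 1))) : X.init.le Y.init := by
  obtain ⟨f, hf, hsub⟩ := hle
  have hft : f (Fin.last m) = Fin.last (m + 1) := by
    obtain ⟨a, ha⟩ := X.level_nonempty (Fin.last m)
    exact Y.level_eq_of_mem (hsub _ ha) (hP ha)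
  refine ⟨fun j => ⟨(f j.castSucc : ℕ), ?_⟩, ?_, ?_⟩
  · have h1 : f j.castSucc < f (Fin.last m) := hf (Fin.castSucc_lt_last j)
    rw [hft] at h1
    have h2 := Fin.lt_def.mp h1
    simp only [Fin.val_last] at h2
    omega
  · intro i j hij
    have h1 : f i.castSucc < f j.castSucc := hf (Fin.castSucc_lt_castSucc_iff.mpr hij)
    exact Fin.mk_lt_mk.mpr (Fin.lt_def.mp h1)
  · intro j
    exact fun a ha => hsub j.castSucc ha

lemma eq_init_of_not_top {m : ℕ} {Y : TriSet (m + 2)} {X : TriSet (m + 1)} (hle : X.le Y)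
    (hP : ¬ X.level (Fin.last m) ⊆ Y.level (Fin.last (m + 1))) : X = Y.init := by
  obtain ⟨f, hf, hsub⟩ := hle
  have hle' := strictMono_fin_le hf
  have hft : (f (Fin.last m) : ℕ) = m := by
    have h1 := hle' (Fin.last m)
    have h2 := (f (Fin.last m)).isLt
    simp only [Fin.val_last] at h1
    rcases Nat.lt_or_ge ((f (Fin.last m)) : ℕ) (m + 1) with h | h
    · omega
    · exfalso; apply hP
      have he : f (Fin.last m) = Fin.last (m + 1) := Fin.ext (by rw [Fin.val_last]; omega)
      rw [← he]; exact hsub _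
  have hfj : ∀ j : Fin (m + 1), (f j : ℕ) = (j : ℕ) := by
    have hlt : ∀ j : Fin (m + 1), (f j : ℕ) < m + 1 := by
      intro j
      have := Fin.le_def.mp (hf.monotone (Fin.le_last j))
      omega
    have := strictMono_fin_id (g := fun j : Fin (m + 1) => (⟨(f j : ℕ), hlt j⟩ : Fin (m + 1)))
      (fun i j hij => Fin.lt_def.mpr (Fin.lt_def.mp (hf hij)))
    intro j
    exact congrArg Fin.val (this j)
  apply TriSet.ext'
  intro j
  have hsub' : X.level j ⊆ Y.init.level j := by
    have he : f j = Fin.castLE (Nat.sub_le (m + 2) 1) j := Fin.ext (hfj j)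
    have := hsub j
    rw [he] at this
    exact this
  refine Finset.eq_of_subset_of_card_le hsub' ?_
  rw [X.card_level, Y.init.card_level]

lemma init_le {m : ℕ} (Y : TriSet (m + 2)) : Y.init.le Y := by
  exact ⟨Fin.castSucc, Fin.strictMono_castSucc, fun j => fun a ha => ha⟩

lemma not_top_init {m : ℕ} (Y : TriSet (m + 2)) :
    ¬ (Y.init.level (Fin.last m) ⊆ Y.level (Fin.last (m + 1))) := by
  intro h
  obtain ⟨a, ha⟩ := Y.init.level_nonempty (Fin.last m)
  have hb := h ha
  have ha' : a ∈ Y.level (Fin.castLE (Nat.sub_le (m + 2) 1) (Fin.last m)) := ha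
  have h1 := congrArg Fin.val (Y.level_eq_of_mem ha' hb)
  simp only [Fin.coe_castLE, Fin.val_last] at h1
  omega

/-- level function for the constructed triangular set -/
def buildLevel (m : ℕ) (X' : TriSet m) (S : Finset ℕ) : Fin (m + 1) → Finset ℕ :=
  fun j => if h : (j : ℕ) < m then X'.level ⟨j, h⟩ else S

/-- The triangular set built from a top level `S` and a smaller triangular set `X'`. -/
def buildX (m : ℕ) (Y : TriSet (m + 2)) (S : Finset ℕ)
    (hS : S ∈ (Y.level (Fin.last (m + 1))).powersetCard (m + 1))
    (X' : TriSet m) (hX' : X'.le Y.init) : TriSet (m + 1) where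
  level := buildLevel m X' S
  card_level j := by
    rcases Finset.mem_powersetCard.mp hS with ⟨hsubS, hcard⟩
    rw [buildLevel]
    by_cases h : (j : ℕ) < m
    · rw [dif_pos h, X'.card_level]
    · have hj := j.isLt
      have : (j : ℕ) = m := by omega
      rw [dif_neg h, hcard, this]
  ordered i j hij a ha b hb := by
    rcases Finset.mem_powersetCard.mp hS with ⟨hsubS, hcard⟩
    obtain ⟨f, hf, hsubf⟩ := hX'
    rw [buildLevel] at ha hb
    by_cases hi : (i : ℕ) < m
    · by_cases hj : (j : ℕ) < m
      · rw [dif_pos hi] at ha; rw [dif_pos hj] at hb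
        exact X'.ordered ⟨i, hi⟩ ⟨j, hj⟩ (Fin.mk_lt_mk.mpr (Fin.lt_def.mp hij)) a ha b hb
      · rw [dif_pos hi] at ha; rw [dif_neg hj] at hb
        have ha' : a ∈ Y.level (Fin.castLE (Nat.sub_le (m + 2) 1) (f ⟨i, hi⟩)) := hsubf _ ha
        have hb' : b ∈ Y.level (Fin.last (m + 1)) := hsubS hb
        refine Y.ordered _ (Fin.last (m + 1)) ?_ a ha' b hb'
        have := (f ⟨i, hi⟩).isLt
        simp only [Fin.lt_def, Fin.coe_castLE, Fin.val_last]
        omega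
    · exfalso
      have := j.isLt
      have := Fin.lt_def.mp hij
      by_cases hj : (j : ℕ) < m <;> omega

lemma build_le {m : ℕ} (Y : TriSet (m + 2)) (S : Finset ℕ)
    (hS : S ∈ (Y.level (Fin.last (m + 1))).powersetCard (m + 1))
    (X' : TriSet m) (hX' : X'.le Y.init) : (buildX m Y S hS X' hX').le Y := by
  obtain ⟨f, hf, hsubf⟩ := hX'
  refine ⟨fun j => if h : (j : ℕ) < m then Fin.castLE (by omega) (f ⟨j, h⟩) else Fin.last (m + 1),
    ?_, ?_⟩
  · intro i j hij
    have hij' := Fin.lt_def.mp hij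
    dsimp only
    by_cases hi : (i : ℕ) < m <;> by_cases hj : (j : ℕ) < m
    · rw [dif_pos hi, dif_pos hj]
      have := Fin.lt_def.mp (hf (show (⟨(i : ℕ), hi⟩ : Fin m) < ⟨(j : ℕ), hj⟩ from
        Fin.lt_def.mpr hij'))
      exact Fin.lt_def.mpr (by simpa using this)
    · rw [dif_pos hi, dif_neg hj]
      have := (f ⟨(i : ℕ), hi⟩).isLt
      simp only [Fin.lt_def, Fin.coe_castLE, Fin.val_last]
      omega
    · exfalso; omega
    · exfalso; have := i.isLt; have := j.isLt; omega
  · intro j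
    show buildLevel m X' S j ⊆
      Y.level (if h : (j : ℕ) < m then Fin.castLE (by omega) (f ⟨(j : ℕ), h⟩)
        else Fin.last (m + 1))
    rw [buildLevel]
    by_cases h : (j : ℕ) < m
    · rw [dif_pos h, dif_pos h]
      exact fun a ha => hsubf ⟨(j : ℕ), h⟩ ha
    · rw [dif_neg h, dif_neg h]
      exact (Finset.mem_powersetCard.mp hS).1

lemma build_top {m : ℕ} (Y : TriSet (m + 2)) (S : Finset ℕ)
    (hS : S ∈ (Y.level (Fin.last (m + 1))).powersetCard (m + 1))
    (X' : TriSet m) (hX' : X'.le Y.init) :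
    (buildX m Y S hS X' hX').level (Fin.last m) ⊆ Y.level (Fin.last (m + 1)) := by
  show buildLevel m X' S (Fin.last m) ⊆ _
  rw [buildLevel, dif_neg (by simp)]
  exact (Finset.mem_powersetCard.mp hS).1

/-- The bijection for the top case. -/
noncomputable def topEquiv (m : ℕ) (Y : TriSet (m + 2)) :
    {Z : {X : TriSet (m + 1) // X.le Y} //
        Z.1.level (Fin.last m) ⊆ Y.level (Fin.last (m + 1))} ≃
      {S // S ∈ (Y.level (Fin.last (m + 1))).powersetCard (m + 1)} ×
        {X : TriSet m // X.le Y.init} where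
  toFun Z := (⟨Z.1.1.level (Fin.last m), by
      rw [Finset.mem_powersetCard]
      exact ⟨Z.2, by rw [Z.1.1.card_level]; simp⟩⟩,
    ⟨Z.1.1.init, le_init_of_top Z.1.2 Z.2⟩)
  invFun SX := ⟨⟨buildX m Y SX.1.1 SX.1.2 SX.2.1 SX.2.2,
      build_le Y SX.1.1 SX.1.2 SX.2.1 SX.2.2⟩,
    build_top Y SX.1.1 SX.1.2 SX.2.1 SX.2.2⟩
  left_inv Z := by
    apply Subtype.ext; apply Subtype.ext; apply TriSet.ext'
    intro j
    show buildLevel m Z.1.1.init (Z.1.1.level (Fin.last m)) j = Z.1.1.level j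
    rw [buildLevel]
    by_cases h : (j : ℕ) < m
    · rw [dif_pos h]; rfl
    · rw [dif_neg h]
      congr 1
      have := j.isLt
      exact Fin.ext (by rw [Fin.val_last]; omega)
  right_inv SX := by
    refine Prod.ext ?_ ?_
    · apply Subtype.ext
      show buildLevel m SX.2.1 SX.1.1 (Fin.last m) = SX.1.1
      rw [buildLevel, dif_neg (by simp)]
    · apply Subtype.ext
      apply TriSet.ext'
      intro j
      show buildLevel m SX.2.1 SX.1.1 (Fin.castLE (Nat.sub_le (m + 1) 1) j) = SX.2.1.level j
      rw [buildLevel, dif_pos (show ((Fin.castLE (Nat.sub_le (m + 1) 1) j : Fin (m + 1)) : ℕ) < m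
        from j.isLt)]
      rfl

theorem aux_card (m : ℕ) (Y : TriSet (m + 2)) :
    Nat.card {X : TriSet (m + 1) // X.le Y} =
      1 + (m + 2) * Nat.card {X : TriSet m // X.le Y.init} := by
  classical
  have h1 : Nat.card {X : TriSet (m + 1) // X.le Y} =
      Nat.card {Z : {X : TriSet (m + 1) // X.le Y} //
          Z.1.level (Fin.last m) ⊆ Y.level (Fin.last (m + 1))} +
      Nat.card {Z : {X : TriSet (m + 1) // X.le Y} //
          ¬ Z.1.level (Fin.last m) ⊆ Y.level (Fin.last (m + 1))} := by
    rw [← Nat.card_sum]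
    exact Nat.card_congr (Equiv.sumCompl _).symm
  have h2 : Nat.card {Z : {X : TriSet (m + 1) // X.le Y} //
      ¬ Z.1.level (Fin.last m) ⊆ Y.level (Fin.last (m + 1))} = 1 := by
    rw [Nat.card_eq_one_iff_unique]
    refine ⟨⟨fun Z1 Z2 => ?_⟩, ⟨⟨⟨Y.init, init_le Y⟩, not_top_init Y⟩⟩⟩
    apply Subtype.ext; apply Subtype.ext
    rw [eq_init_of_not_top Z1.1.2 Z1.2, eq_init_of_not_top Z2.1.2 Z2.2]
  have h3 : Nat.card {Z : {X : TriSet (m + 1) // X.le Y} //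
      Z.1.level (Fin.last m) ⊆ Y.level (Fin.last (m + 1))} =
      (m + 2) * Nat.card {X : TriSet m // X.le Y.init} := by
    rw [Nat.card_congr (topEquiv m Y), Nat.card_prod]
    congr 1
    rw [Nat.card_eq_fintype_card, Fintype.card_coe, Finset.card_powersetCard, Y.card_level]
    show ((m + 1) + 1).choose (m + 1) = m + 2
    exact Nat.choose_succ_self_right (m + 1)
  rw [h1, h2, h3]
  ring

/-- For `k ≥ 2` and a triangular set `Y` with `k` levels, with `Y'` the triangular set
obtained by removing the last level of `Y`, `|△_{k-1}(Y)| = 1 + k · |△_{k-2}(Y')|`. -/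
theorem card_triSet_pred (k : ℕ) (hk : 2 ≤ k) (Y : TriSet k) :
    Nat.card {X : TriSet (k - 1) // X.le Y} =
      1 + k * Nat.card {X : TriSet (k - 2) // X.le Y.init} := by
  obtain ⟨m, rfl⟩ := Nat.exists_eq_add_of_le' hk
  exact aux_card m Y
end

section
/- Define the bracket numbers by the recursion [n choose k] = [n-1 choose k] + C(n,k)·[n-1 choose k-1], with [n choose 0] = 1 and [n choose n] = 1. Then for all natural numbers k < n and every triangular set X with n levels, [n choose k] = |△_k(X)|; that is, [n choose k] counts the number of triangular subsets with k levels of a triangular set with n levels. -/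
/-- The bracket numbers, defined by the recursion
`[n, k] = [n-1, k] + C(n,k) * [n-1, k-1]` with `[n, 0] = 1` and `[n, n] = 1`. -/
def brack : ℕ → ℕ → ℕ
  | _, 0 => 1
  | 0, _ + 1 => 0
  | n + 1, k + 1 =>
    if n + 1 = k + 1 then 1
    else brack n (k + 1) + Nat.choose (n + 1) (k + 1) * brack n k

/-!
Sort the triangular sets `Z ≤ X` with `k + 1` levels, where `X` has `n + 1` levels, by whether
the top level of `Z` lies in the top level of `X`. If it does not, then `Z ≤ X'`, where `X'` is
`X` without its top level. If it does, then `Z` is a `(k + 1)`-subset of the top level of `X`,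
chosen in `C(n + 1, k + 1)` ways, stacked on a triangular set `Z' ≤ X'` with `k` levels.
This is the recursion of the bracket numbers, valid for all `n, k` because `[n, n] = 1` and
`[n, k] = 0` for `n < k`.
-/

theorem brack_eq_zero_of_lt : ∀ {n k : ℕ}, n < k → brack n k = 0
  | 0, _ + 1, _ => rfl
  | n + 1, k + 1, h => by
    rw [brack, if_neg (by omega), brack_eq_zero_of_lt (by omega), Nat.choose_eq_zero_of_lt h,
      zero_mul, add_zero]

theorem brack_self : ∀ n : ℕ, brack n n = 1
  | 0 => rfl
  | _ + 1 => if_pos rfl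

theorem brack_succ_succ (n k : ℕ) :
    brack (n + 1) (k + 1) = brack n (k + 1) + (n + 1).choose (k + 1) * brack n k := by
  rw [brack]
  split_ifs with h
  · obtain rfl : n = k := by omega
    rw [brack_eq_zero_of_lt n.lt_succ_self, brack_self, Nat.choose_self]
  · rfl

theorem Fin.forall_lt_of_castSucc {m : ℕ} {P : Fin (m + 1) → Fin (m + 1) → Prop}
    (hcast : ∀ i j : Fin m, i < j → P i.castSucc j.castSucc)
    (hlast : ∀ i : Fin m, P i.castSucc (Fin.last m)) : ∀ i j, i < j → P i j := by
  intro i j hij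
  obtain ⟨i, rfl⟩ := Fin.exists_castSucc_eq.2 (hij.trans_le (Fin.le_last j)).ne
  induction j using Fin.lastCases with
  | last => exact hlast i
  | cast j => exact hcast i j (Fin.castSucc_lt_castSucc_iff.1 hij)

namespace TriSet

theorem level_injective {k : ℕ} :
    Function.Injective (level : TriSet k → Fin k → Finset ℕ) := by
  rintro ⟨_, _, _⟩ ⟨_, _, _⟩ rfl
  rfl

theorem level_nonempty_s4 {k : ℕ} (X : TriSet k) (j : Fin k) : (X.level j).Nonempty :=
  Finset.card_pos.mp (by rw [X.card_level]; omega)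

theorem eq_of_mem_level {k : ℕ} (X : TriSet k) {i j : Fin k} {a : ℕ}
    (hi : a ∈ X.level i) (hj : a ∈ X.level j) : i = j := by
  by_contra hij
  rcases lt_or_gt_of_ne hij with h | h
  · exact lt_irrefl a (X.ordered i j h a hi a hj)
  · exact lt_irrefl a (X.ordered j i h a hj a hi)

instance : Unique (TriSet 0) where
  default := ⟨Fin.elim0, fun j => j.elim0, fun i => i.elim0⟩
  uniq _ := level_injective (funext fun j => j.elim0)

theorem zero_le {n : ℕ} (Z : TriSet 0) (X : TriSet n) : Z.le X :=
  ⟨Fin.elim0, fun a => a.elim0, fun j => j.elim0⟩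

instance finite_le {k n : ℕ} (X : TriSet n) : Finite {Z : TriSet k // Z.le X} := by
  classical
  let U := Finset.univ.biUnion X.level
  refine Finite.of_injective (β := Fin k → U.powerset) (fun Z j => ⟨Z.1.level j, ?_⟩) ?_
  · obtain ⟨f, -, hsub⟩ := Z.2
    exact Finset.mem_powerset.2
      ((hsub j).trans (Finset.subset_biUnion_of_mem _ (Finset.mem_univ _)))
  · intro Z₁ Z₂ h
    exact Subtype.ext (level_injective (funext fun j => congrArg Subtype.val (congrFun h j)))

def snoc {m : ℕ} (W : TriSet m) (S : Finset ℕ) (hS : S.card = m + 1)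
    (hlt : ∀ j, ∀ a ∈ W.level j, ∀ b ∈ S, a < b) : TriSet (m + 1) where
  level := Fin.snoc W.level S
  card_level j := by
    induction j using Fin.lastCases with
    | last => simpa using hS
    | cast j => simpa using W.card_level j
  ordered := Fin.forall_lt_of_castSucc
    (fun i j hij => by simpa using W.ordered i j hij)
    (fun i => by simpa using hlt i)

def init_s4 {n : ℕ} (X : TriSet (n + 1)) : TriSet n where
  level j := X.level j.castSucc
  card_level j := by rw [X.card_level]; simp
  ordered i j hij := X.ordered _ _ (Fin.castSucc_lt_castSucc_iff.mpr hij)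

section snoc

variable {m : ℕ} (W : TriSet m) (S : Finset ℕ) (hS : S.card = m + 1)
  (hlt : ∀ j, ∀ a ∈ W.level j, ∀ b ∈ S, a < b)

@[simp] theorem snoc_level_last : (W.snoc S hS hlt).level (Fin.last m) = S := by
  simp [snoc]

@[simp] theorem snoc_level_castSucc (j : Fin m) :
    (W.snoc S hS hlt).level j.castSucc = W.level j := by
  simp [snoc]

@[simp] theorem init_snoc : (W.snoc S hS hlt).init_s4 = W :=
  level_injective (funext (snoc_level_castSucc W S hS hlt))

end snoc

@[simp] theorem init_level {n : ℕ} (X : TriSet (n + 1)) (j : Fin n) :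
    X.init_s4.level j = X.level j.castSucc := rfl

theorem snoc_init {m : ℕ} (Z : TriSet (m + 1)) :
    Z.init_s4.snoc (Z.level (Fin.last m)) (Z.card_level _)
      (fun i _ hi _ hb => Z.ordered _ _ (Fin.castSucc_lt_last i) _ hi _ hb) = Z := by
  refine level_injective (funext fun j => ?_)
  induction j using Fin.lastCases with
  | last => exact snoc_level_last ..
  | cast j => exact snoc_level_castSucc ..

section le

variable {n : ℕ} (X : TriSet (n + 1))

theorem le_init_of_ne_last {k : ℕ} {Z : TriSet k} {f : Fin k → Fin (n + 1)} (hf : StrictMono f)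
    (hsub : ∀ j, Z.level j ⊆ X.level (f j)) (hne : ∀ j, f j ≠ Fin.last n) : Z.le X.init_s4 :=
  ⟨fun j => (f j).castPred (hne j), fun _ _ hab => Fin.castPred_lt_castPred_iff.mpr (hf hab),
    fun j => by simpa using hsub j⟩

theorem le_init_iff {m : ℕ} (Z : TriSet (m + 1)) :
    Z.le X.init_s4 ↔ Z.le X ∧ ¬ Z.level (Fin.last m) ⊆ X.level (Fin.last n) := by
  constructor
  · rintro ⟨g, hg, hsub⟩
    refine ⟨⟨Fin.castSucc ∘ g, Fin.strictMono_castSucc.comp hg, hsub⟩, fun htop => ?_⟩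
    obtain ⟨a, ha⟩ := Z.level_nonempty_s4 (Fin.last m)
    exact (Fin.castSucc_lt_last _).ne (X.eq_of_mem_level (hsub _ ha) (htop ha))
  · rintro ⟨⟨f, hf, hsub⟩, htop⟩
    have hlast : f (Fin.last m) ≠ Fin.last n := fun h => htop (h ▸ hsub _)
    refine le_init_of_ne_last X hf hsub fun j h => hlast (le_antisymm (Fin.le_last _) ?_)
    exact h ▸ hf.monotone (Fin.le_last j)

theorem init_le_init {m : ℕ} {Z : TriSet (m + 1)} (hZ : Z.le X)
    (htop : Z.level (Fin.last m) ⊆ X.level (Fin.last n)) : Z.init_s4.le X.init_s4 := by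
  obtain ⟨f, hf, hsub⟩ := hZ
  obtain ⟨a, ha⟩ := Z.level_nonempty_s4 (Fin.last m)
  have hlast : f (Fin.last m) = Fin.last n := X.eq_of_mem_level (hsub _ ha) (htop ha)
  exact le_init_of_ne_last X (hf.comp Fin.strictMono_castSucc) (fun j => hsub _)
    fun j => hlast ▸ (hf (Fin.castSucc_lt_last j)).ne

theorem lt_of_le_init {m : ℕ} {W : TriSet m} (hW : W.le X.init_s4) {j : Fin m} {a b : ℕ}
    (ha : a ∈ W.level j) (hb : b ∈ X.level (Fin.last n)) : a < b := by
  obtain ⟨g, -, hsub⟩ := hW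
  exact X.ordered _ _ (Fin.castSucc_lt_last (g j)) a (hsub j ha) b hb

theorem snoc_le {m : ℕ} {W : TriSet m} (hW : W.le X.init_s4) {S : Finset ℕ}
    (hS : S ⊆ X.level (Fin.last n)) (hcard : S.card = m + 1) :
    (W.snoc S hcard fun _ _ ha _ hb => lt_of_le_init X hW ha (hS hb)).le X := by
  obtain ⟨g, hg, hsub⟩ := hW
  refine ⟨Fin.snoc (Fin.castSucc ∘ g) (Fin.last n), ?_, fun j => ?_⟩
  · exact Fin.forall_lt_of_castSucc (fun i j hij => by simpa using hg hij)
      (fun i => by simp)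
  · induction j using Fin.lastCases with
    | last => simpa using hS
    | cast j => simpa using hsub j

def leTopEquiv (m : ℕ) :
    {Z : TriSet (m + 1) // Z.le X ∧ Z.level (Fin.last m) ⊆ X.level (Fin.last n)} ≃
      (X.level (Fin.last n)).powersetCard (m + 1) × {W : TriSet m // W.le X.init_s4} where
  toFun Z :=
    (⟨Z.1.level (Fin.last m), Finset.mem_powersetCard.2 ⟨Z.2.2, by simp [card_level]⟩⟩,
      ⟨Z.1.init_s4, init_le_init X Z.2.1 Z.2.2⟩)
  invFun SW := ⟨_, snoc_le X SW.2.2 (Finset.mem_powersetCard.1 SW.1.2).1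
    (Finset.mem_powersetCard.1 SW.1.2).2, by simpa using (Finset.mem_powersetCard.1 SW.1.2).1⟩
  left_inv Z := Subtype.ext (snoc_init Z.1)
  right_inv _ := Prod.ext (Subtype.ext (by simp)) (Subtype.ext (by simp))

def leEquiv (m : ℕ) : {Z : TriSet (m + 1) // Z.le X} ≃
    {Z : TriSet (m + 1) // Z.le X.init_s4} ⊕
      (X.level (Fin.last n)).powersetCard (m + 1) × {W : TriSet m // W.le X.init_s4} :=
  (Equiv.sumCompl fun Z : {Z : TriSet (m + 1) // Z.le X} =>
      Z.1.level (Fin.last m) ⊆ X.level (Fin.last n)).symm.trans <|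
    (Equiv.sumComm _ _).trans <| Equiv.sumCongr
      ((Equiv.subtypeSubtypeEquivSubtypeInter _ _).trans
        (Equiv.subtypeEquivRight fun Z => (le_init_iff X Z).symm))
      ((Equiv.subtypeSubtypeEquivSubtypeInter _ _).trans (leTopEquiv X m))

theorem card_le_succ (m : ℕ) :
    Nat.card {Z : TriSet (m + 1) // Z.le X} =
      Nat.card {Z : TriSet (m + 1) // Z.le X.init_s4} +
        (n + 1).choose (m + 1) * Nat.card {W : TriSet m // W.le X.init_s4} := by
  rw [Nat.card_congr (leEquiv X m), Nat.card_sum, Nat.card_prod, Nat.card_eq_finsetCard,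
    Finset.card_powersetCard, X.card_level, Fin.val_last]

end le

theorem card_le_eq_brack :
    ∀ {n k : ℕ} (X : TriSet n), Nat.card {Z : TriSet k // Z.le X} = brack n k
  | n, 0, X =>
    have : Nonempty {Z : TriSet 0 // Z.le X} := ⟨⟨default, zero_le _ X⟩⟩
    Nat.card_unique.trans (by cases n <;> rfl)
  | 0, k + 1, X =>
    have : IsEmpty {Z : TriSet (k + 1) // Z.le X} := ⟨fun ⟨_, f, _⟩ => (f 0).elim0⟩
    Nat.card_of_isEmpty
  | _ + 1, k + 1, X => by
    rw [card_le_succ, card_le_eq_brack X.init_s4, card_le_eq_brack X.init_s4, brack_succ_succ]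

end TriSet

theorem brack_counts_triSets_general (n k : ℕ) (X : TriSet n) :
    brack n k = Nat.card {Z : TriSet k // Z.le X} :=
  (TriSet.card_le_eq_brack X).symm

/-- For `k < n`, the bracket number `[n, k]` counts the number of triangular subsets
with `k` levels of any triangular set with `n` levels. -/
theorem brack_counts_triSets (n k : ℕ) (hkn : k < n) (X : TriSet n) :
    brack n k = Nat.card {Z : TriSet k // Z.le X} :=
  brack_counts_triSets_general n k X
end

section
/- For all natural numbers 0 < k ≤ n, the bracket number satisfies [n choose k] ≥ C(n,k) ≥ (n/k)^k. -/
lemma brack_pos : ∀ n k : ℕ, k ≤ n → 0 < brack n k := by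
  intro n
  induction n with
  | zero => intro k hk; interval_cases k; simp [brack]
  | succ n ih =>
    intro k hk
    cases k with
    | zero => simp [brack]
    | succ k =>
      rw [brack]
      split
      · norm_num
      · have hk' : k ≤ n := by omega
        have h1 : 0 < Nat.choose (n + 1) (k + 1) := Nat.choose_pos (by omega)
        have h2 := ih k hk'
        positivity

lemma choose_le_brack : ∀ n k : ℕ, k ≤ n → Nat.choose n k ≤ brack n k := by
  intro n
  induction n with
  | zero => intro k hk; interval_cases k; simp [brack]
  | succ n ih =>
    intro k hk
    cases k with
    | zero => simp [brack]
    | succ k =>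
      rw [brack]
      split
      · next h => rw [h]; simp
      · next h =>
        have hk' : k ≤ n := by omega
        have h2 := brack_pos n k hk'
        calc Nat.choose (n+1) (k+1) = Nat.choose (n+1) (k+1) * 1 := by ring
          _ ≤ Nat.choose (n+1) (k+1) * brack n k := by exact Nat.mul_le_mul_left _ h2
          _ ≤ brack n (k + 1) + Nat.choose (n + 1) (k + 1) * brack n k := Nat.le_add_left _ _

lemma pow_div_le_choose : ∀ k n : ℕ, k ≤ n → ((n : ℝ) / (k : ℝ)) ^ k ≤ (Nat.choose n k : ℝ) := by
  intro k
  induction k with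
  | zero => intro n _; simp
  | succ k ih =>
    intro n hn
    obtain ⟨m, rfl⟩ : ∃ m, n = m + 1 := ⟨n - 1, by omega⟩
    have hk : k ≤ m := by omega
    have key : ((m + 1 : ℕ) : ℝ) * (Nat.choose m k : ℝ) = (Nat.choose (m+1) (k+1) : ℝ) * ((k+1 : ℕ) : ℝ) := by
      exact_mod_cast congrArg (Nat.cast : ℕ → ℝ) (Nat.add_one_mul_choose_eq m k)
    have hkpos : (0:ℝ) < (k:ℝ) + 1 := by positivity
    have hb : (((m:ℝ) + 1) / ((k:ℝ) + 1)) ^ k ≤ ((m : ℝ) / (k : ℝ)) ^ k := by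
      cases k with
      | zero => simp
      | succ j =>
        apply pow_le_pow_left₀ (by positivity)
        rw [div_le_div_iff₀ (by positivity) (by positivity)]
        have hjm : ((j:ℝ) + 1) ≤ (m:ℝ) := by exact_mod_cast hk
        push_cast
        nlinarith [hjm]
    have hbnn : (0:ℝ) ≤ ((m:ℝ) + 1) / ((k:ℝ) + 1) := by positivity
    calc (((m+1:ℕ):ℝ) / ((k+1:ℕ):ℝ)) ^ (k+1)
        = (((m:ℝ)+1) / ((k:ℝ)+1)) * ((((m:ℝ)+1) / ((k:ℝ)+1)) ^ k) := by push_cast; ring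
      _ ≤ (((m:ℝ)+1) / ((k:ℝ)+1)) * (((m : ℝ) / (k : ℝ)) ^ k) := by
          exact mul_le_mul_of_nonneg_left hb hbnn
      _ ≤ (((m:ℝ)+1) / ((k:ℝ)+1)) * (Nat.choose m k : ℝ) := by
          exact mul_le_mul_of_nonneg_left (ih m hk) hbnn
      _ = (Nat.choose (m+1) (k+1) : ℝ) := by
          rw [div_mul_eq_mul_div, eq_comm, eq_div_iff (by positivity)]
          push_cast at key ⊢
          linarith

/-- For `0 < k ≤ n`, `[n, k] ≥ C(n, k) ≥ (n/k)^k`. -/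
theorem brack_ge_choose_ge_pow (n k : ℕ) (h0 : 0 < k) (hkn : k ≤ n) :
    Nat.choose n k ≤ brack n k ∧
      ((n : ℝ) / (k : ℝ)) ^ k ≤ (Nat.choose n k : ℝ) := by
  exact ⟨choose_le_brack n k hkn, pow_div_le_choose k n hkn⟩
end

section
/- For all natural numbers k < n, the bracket number satisfies [n choose k] ≤ C(T_n, T_k), where T_m = m(m+1)/2 is the m-th triangular number. -/
/-- The `n`-th triangular number. -/
def T (n : ℕ) : ℕ := n * (n + 1) / 2

/-! Since `T (n + 1) = T n + (n + 1)`, Vandermonde's identity writes `C(T (n+1), T (k+1))` as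
`∑ C(T n, i) * C(n + 1, j)` over `i + j = T k + (k + 1)`. The two terms `(T (k+1), 0)` and
`(T k, k + 1)` already dominate the two terms of the recursion of `brack`, so the bound follows by
induction on `n`. -/

lemma T_succ (n : ℕ) : T (n + 1) = T n + (n + 1) := by
  unfold T
  have h : (n + 1) * (n + 1 + 1) = n * (n + 1) + 2 * (n + 1) := by ring
  rw [h, Nat.add_mul_div_left _ _ two_pos]

theorem Nat.choose_add_choose_mul_choose_le_choose_add (m r a b : ℕ) :
    m.choose (a + (b + 1)) + r.choose (b + 1) * m.choose a ≤ (m + r).choose (a + (b + 1)) := by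
  have hne : ((a + (b + 1), 0) : ℕ × ℕ) ≠ (a, b + 1) := by simp
  calc m.choose (a + (b + 1)) + r.choose (b + 1) * m.choose a
      = m.choose (a + (b + 1)) * r.choose 0 + m.choose a * r.choose (b + 1) := by
        rw [Nat.choose_zero_right, mul_one, mul_comm]
    _ ≤ _ := by
        rw [Nat.add_choose_eq]
        refine Finset.add_le_sum (f := fun ij ↦ m.choose ij.1 * r.choose ij.2)
          (fun _ _ ↦ Nat.zero_le _) ?_ ?_ hne <;> simp

theorem brack_le_choose_triangular_general (n k : ℕ) :
    brack n k ≤ Nat.choose (T n) (T k) := by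
  induction n generalizing k with
  | zero => cases k <;> simp [brack]
  | succ n ih =>
    rcases k with _ | k
    · simp [brack, T]
    by_cases hnk : n = k
    · simp [brack, hnk]
    calc brack (n + 1) (k + 1)
        = brack n (k + 1) + (n + 1).choose (k + 1) * brack n k := by simp [brack, hnk]
      _ ≤ (T n).choose (T (k + 1)) + (n + 1).choose (k + 1) * (T n).choose (T k) := by
        gcongr <;> apply ih
      _ ≤ (T (n + 1)).choose (T (k + 1)) := by
        rw [T_succ n, T_succ k]
        exact Nat.choose_add_choose_mul_choose_le_choose_add ..

/-- For `k < n`, `[n, k] ≤ C(T_n, T_k)`. -/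
theorem brack_le_choose_triangular (n k : ℕ) (hkn : k < n) :
    brack n k ≤ Nat.choose (T n) (T k) :=
  brack_le_choose_triangular_general n k
end

section
/- In any partition of the 15 positions of a triangular board with 5 levels into two sets X and Y, it is impossible for both X and Y to contain a triangular subset with 3 levels (a △_3). -/
/-- The positions of a triangular board with `m` levels, labeled `1, …, T m`
row by row; row `r` consists of the labels in `(T (r-1), T r]`. -/
def board (m : ℕ) : Finset ℕ := Finset.Icc 1 (T m)

/-- `S` is a triangular subset with `n` levels (a `△_n`) of the board with `m` levels:
there are rows `1 ≤ rows 0 < rows 1 < ⋯ ≤ m` and, for each `j`, a set of `j + 1`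
positions lying in row `rows j`, whose union is `S`. -/
def IsTriangleOn (m n : ℕ) (S : Finset ℕ) : Prop :=
  ∃ rows : Fin n → ℕ, StrictMono rows ∧ (∀ j, 1 ≤ rows j) ∧ (∀ j, rows j ≤ m) ∧
    ∃ L : Fin n → Finset ℕ,
      (∀ j, (L j).card = (j : ℕ) + 1) ∧
      (∀ j, L j ⊆ Finset.Ioc (T (rows j - 1)) (T (rows j))) ∧
      S = Finset.univ.biUnion L

/-- If `X` and `Y` partition the 15 positions of the board with 5 levels, then it is
impossible for both `X` and `Y` to contain a triangular subset with 3 levels. -/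
theorem mines5_not_both_win (X Y : Finset ℕ) (hdisj : Disjoint X Y)
    (hunion : X ∪ Y = board 5) :
    ¬((∃ S, IsTriangleOn 5 3 S ∧ S ⊆ X) ∧ (∃ S, IsTriangleOn 5 3 S ∧ S ⊆ Y)) := by
  rintro ⟨⟨S, ⟨a, ha, ha1, ha5, L, hLc, hLs, hSeq⟩, hSX⟩,
          ⟨S', ⟨b, hb, hb1, hb5, M, hMc, hMs, hS'eq⟩, hS'Y⟩⟩
  have hdSS : Disjoint S S' := hdisj.mono hSX hS'Y
  set row : ℕ → Finset ℕ := fun r => Finset.Ioc (T (r - 1)) (T r) with hrow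
  have hrowcard : ∀ r, r ≤ 5 → (row r).card = r := by
    intro r hr
    interval_cases r <;> decide
  -- per-row capacity constraint
  have hcap : ∀ r, r ≤ 5 → (S ∩ row r).card + (S' ∩ row r).card ≤ r := by
    intro r hr
    have hd : Disjoint (S ∩ row r) (S' ∩ row r) :=
      hdSS.mono Finset.inter_subset_left Finset.inter_subset_left
    calc (S ∩ row r).card + (S' ∩ row r).card
        = ((S ∩ row r) ∪ (S' ∩ row r)).card := (Finset.card_union_of_disjoint hd).symm
      _ ≤ (row r).card := Finset.card_le_card (by
            intro x hx
            rcases Finset.mem_union.mp hx with h | h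
            exacts [(Finset.mem_inter.mp h).2, (Finset.mem_inter.mp h).2])
      _ = r := hrowcard r hr
  -- each triangle puts j+1 cells in its j-th row
  have hcS : ∀ j : Fin 3, (j : ℕ) + 1 ≤ (S ∩ row (a j)).card := by
    intro j
    rw [← hLc j]
    apply Finset.card_le_card
    intro x hx
    exact Finset.mem_inter.mpr
      ⟨hSeq ▸ Finset.mem_biUnion.mpr ⟨j, Finset.mem_univ j, hx⟩, hLs j hx⟩
  have hcS' : ∀ j : Fin 3, (j : ℕ) + 1 ≤ (S' ∩ row (b j)).card := by
    intro j
    rw [← hMc j]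
    apply Finset.card_le_card
    intro x hx
    exact Finset.mem_inter.mpr
      ⟨hS'eq ▸ Finset.mem_biUnion.mpr ⟨j, Finset.mem_univ j, hx⟩, hMs j hx⟩
  have hA0 : 1 ≤ (S ∩ row (a 0)).card := by simpa using hcS 0
  have hA1 : 2 ≤ (S ∩ row (a 1)).card := by simpa using hcS 1
  have hA2 : 3 ≤ (S ∩ row (a 2)).card := by simpa using hcS 2
  have hB0 : 1 ≤ (S' ∩ row (b 0)).card := by simpa using hcS' 0
  have hB1 : 2 ≤ (S' ∩ row (b 1)).card := by simpa using hcS' 1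
  have hB2 : 3 ≤ (S' ∩ row (b 2)).card := by simpa using hcS' 2
  have ha01 : a 0 < a 1 := ha (by decide)
  have ha12 : a 1 < a 2 := ha (by decide)
  have hb01 : b 0 < b 1 := hb (by decide)
  have hb12 : b 1 < b 2 := hb (by decide)
  have ha0l : 1 ≤ a 0 := ha1 0
  have ha2u : a 2 ≤ 5 := ha5 2
  have hb0l : 1 ≤ b 0 := hb1 0
  have hb2u : b 2 ≤ 5 := hb5 2
  set p0 := a 0 with hp0
  set p1 := a 1 with hp1
  set p2 := a 2 with hp2
  set q0 := b 0 with hq0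
  set q1 := b 1 with hq1
  set q2 := b 2 with hq2
  clear_value p0 p1 p2 q0 q1 q2
  clear hp0 hp1 hp2 hq0 hq1 hq2 hcS hcS' ha ha1 ha5 hb hb1 hb5 hLc hLs hMc hMs
    hSeq hS'eq hSX hS'Y hdSS hdisj hunion hrowcard
  have k1 := hcap 1 (by norm_num)
  have k2 := hcap 2 (by norm_num)
  have k3 := hcap 3 (by norm_num)
  have k4 := hcap 4 (by norm_num)
  have k5 := hcap 5 (by norm_num)
  clear hcap
  have hp0u : p0 ≤ 3 := by omega
  have hp1l : 2 ≤ p1 := by omega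
  have hp1u : p1 ≤ 4 := by omega
  have hp2l : 3 ≤ p2 := by omega
  have hq0u : q0 ≤ 3 := by omega
  have hq1l : 2 ≤ q1 := by omega
  have hq1u : q1 ≤ 4 := by omega
  have hq2l : 3 ≤ q2 := by omega
  interval_cases p0 <;> interval_cases p1 <;> interval_cases p2 <;>
    interval_cases q0 <;> interval_cases q1 <;> interval_cases q2 <;> omega
end

section
/- For all natural numbers p and q, if the bottom row of a triangular board with p+q-2 levels is colored with p-1 positions in color X and q-1 positions in color Y, and this pattern is extended so each row of size r has at most min(r, p-1) X-positions and at most min(r, q-1) Y-positions appropriately, then there exists a two-coloring of the board with p+q-2 levels in which neither color contains a triangular subset with p levels (for X) or q levels (for Y). Hence the triangular Ramsey number satisfies R_1(p,q,1) > p+q-2. -/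
/-- The triangular Ramsey number `R₁(p, q, 1)`: the least `m ≥ max p q` such that
every partition of the positions of the board with `m` levels into two color
classes `X` and its complement contains a `△_p` entirely in `X` or a `△_q`
entirely in the complement of `X`. -/
noncomputable def R1 (p q : ℕ) : ℕ :=
  sInf {m | max p q ≤ m ∧ ∀ X : Finset ℕ, X ⊆ board m →
    (∃ S, IsTriangleOn m p S ∧ S ⊆ X) ∨
    (∃ S, IsTriangleOn m q S ∧ S ⊆ board m \ X)}

lemma T_strictMono : StrictMono T :=
  strictMono_nat_of_lt_succ fun n => by rw [T_succ]; omega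

def row (r : ℕ) : Finset ℕ := Finset.Ioc (T (r - 1)) (T r)

lemma card_row (r : ℕ) : (row r).card = r := by
  cases r with
  | zero => rfl
  | succ r => rw [row, Nat.card_Ioc, Nat.add_sub_cancel, T_succ]; omega

lemma board_eq_Ioc (m : ℕ) : board m = Finset.Ioc (T 0) (T m) :=
  Finset.Icc_add_one_left_eq_Ioc 0 (T m)

lemma board_sdiff_board (m l : ℕ) : board m \ board l = Finset.Ioc (T l) (T m) := by
  ext x
  simp only [board, Finset.mem_sdiff, Finset.mem_Icc, Finset.mem_Ioc]
  omega

lemma board_mono {l m : ℕ} (h : l ≤ m) : board l ⊆ board m :=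
  Finset.Icc_subset_Icc le_rfl (T_strictMono.monotone h)

lemma row_subset_board {r m : ℕ} (h : r ≤ m) : row r ⊆ board m := by
  rw [board_eq_Ioc]
  exact Finset.Ioc_subset_Ioc (T_strictMono.monotone (Nat.zero_le _))
    (T_strictMono.monotone h)

lemma Fin.strictMono_snoc {α : Type*} [Preorder α] {n : ℕ} {f : Fin n → α}
    (hf : StrictMono f) {x : α} (hx : ∀ i, f i < x) :
    StrictMono (Fin.snoc f x : Fin (n + 1) → α) := by
  intro i j hij
  obtain ⟨i, rfl⟩ := Fin.exists_castSucc_eq.mpr (Fin.ne_last_of_lt hij)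
  cases j using Fin.lastCases with
  | last => simpa using hx i
  | cast j => simpa using hf (Fin.castSucc_lt_castSucc_iff.mp hij)

namespace IsTriangleOn

variable {m n : ℕ} {S : Finset ℕ}

lemma empty (m : ℕ) : IsTriangleOn m 0 ∅ :=
  ⟨Fin.elim0, fun i => i.elim0, fun i => i.elim0, fun i => i.elim0,
    Fin.elim0, fun i => i.elim0, fun i => i.elim0, by simp⟩

lemma mono {m' : ℕ} (h : IsTriangleOn m n S) (hm : m ≤ m') : IsTriangleOn m' n S := by
  obtain ⟨rows, hmono, hpos, hle, L, hcard, hrow, hS⟩ := h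
  exact ⟨rows, hmono, hpos, fun j => (hle j).trans hm, L, hcard, hrow, hS⟩

lemma exists_subset_of_le {k : ℕ} (h : IsTriangleOn m n S) (hk : k ≤ n) :
    ∃ S' ⊆ S, IsTriangleOn m k S' := by
  obtain ⟨rows, hmono, hpos, hle, L, hcard, hrow, rfl⟩ := h
  refine ⟨Finset.univ.biUnion (L ∘ Fin.castLE hk), ?_, rows ∘ Fin.castLE hk,
    hmono.comp (Fin.strictMono_castLE hk), fun j => hpos _, fun j => hle _,
    L ∘ Fin.castLE hk, fun j => hcard _, fun j => hrow _, rfl⟩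
  exact Finset.biUnion_subset.mpr fun j _ =>
    Finset.subset_biUnion_of_mem L (Finset.mem_univ _)

lemma union_row {L' : Finset ℕ} (h : IsTriangleOn m n S) (hL' : L' ⊆ row (m + 1))
    (hcard : L'.card = n + 1) : IsTriangleOn (m + 1) (n + 1) (S ∪ L') := by
  obtain ⟨rows, hmono, hpos, hle, L, hcardL, hrow, rfl⟩ := h
  refine ⟨Fin.snoc rows (m + 1), Fin.strictMono_snoc hmono fun j => Nat.lt_succ_of_le (hle j),
    Fin.lastCases (by simp) (by simpa using hpos),
    Fin.lastCases (by simp) (by simpa using fun j => (hle j).trans m.le_succ),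
    Fin.snoc L L', Fin.lastCases (by simpa using hcard) (by simpa using hcardL),
    Fin.lastCases (by simpa [row] using hL') (by simpa using hrow), ?_⟩
  ext x
  simp [Finset.mem_biUnion, Fin.exists_fin_succ', or_comm]

/-- The rows of a `△_n` are `n` distinct numbers, here all in `(a, b]`. -/
lemma le_sub_of_subset_Ioc {a b : ℕ} (h : IsTriangleOn m n S)
    (hS : S ⊆ Finset.Ioc (T a) (T b)) : n ≤ b - a := by
  obtain ⟨rows, hmono, -, -, L, hcard, hrow, rfl⟩ := h
  have hrows : ∀ j, rows j ∈ Finset.Ioc a b := by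
    intro j
    obtain ⟨x, hx⟩ : (L j).Nonempty := by rw [← Finset.card_pos, hcard j]; omega
    have hxS := Finset.mem_Ioc.mp (hS (Finset.mem_biUnion.mpr ⟨j, Finset.mem_univ _, hx⟩))
    have hxrow := Finset.mem_Ioc.mp (hrow j hx)
    have ha : a < rows j := T_strictMono.lt_iff_lt.mp (hxS.1.trans_le hxrow.2)
    have hb : rows j - 1 < b := T_strictMono.lt_iff_lt.mp (hxrow.1.trans_le hxS.2)
    exact Finset.mem_Ioc.mpr ⟨ha, by omega⟩
  simpa using Finset.card_le_card_of_injOn (s := Finset.univ) rows (fun j _ => hrows j)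
    hmono.injective.injOn

end IsTriangleOn

/-- Row `n + 1` has `n + 1` positions, so it contains `a + 1` of them in `X` or `b + 1` outside
`X`; either extends one of the two triangles. -/
lemma exists_triangles_add_eq (n : ℕ) (X : Finset ℕ) :
    ∃ a b, a + b = n ∧ (∃ S ⊆ X, IsTriangleOn n a S) ∧
      (∃ S ⊆ board n \ X, IsTriangleOn n b S) := by
  induction n with
  | zero => exact ⟨0, 0, rfl, ⟨∅, by simp, .empty 0⟩, ⟨∅, by simp, .empty 0⟩⟩
  | succ n ih =>
    obtain ⟨a, b, hab, ⟨SX, hSX, hX⟩, ⟨SY, hSY, hY⟩⟩ := ih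
    have hSY' : SY ⊆ board (n + 1) \ X :=
      hSY.trans (Finset.sdiff_subset_sdiff (board_mono n.le_succ) le_rfl)
    have hsplit := Finset.card_inter_add_card_sdiff (row (n + 1)) X
    rw [card_row] at hsplit
    by_cases hcX : a + 1 ≤ (row (n + 1) ∩ X).card
    · obtain ⟨L, hL, hcard⟩ := Finset.exists_subset_card_eq hcX
      refine ⟨a + 1, b, by omega,
        ⟨SX ∪ L, ?_, hX.union_row (hL.trans Finset.inter_subset_left) hcard⟩,
        ⟨SY, hSY', hY.mono n.le_succ⟩⟩
      exact Finset.union_subset hSX (hL.trans Finset.inter_subset_right)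
    · obtain ⟨L, hL, hcard⟩ :=
        Finset.exists_subset_card_eq (show b + 1 ≤ (row (n + 1) \ X).card by omega)
      refine ⟨a, b + 1, by omega, ⟨SX, hSX, hX.mono n.le_succ⟩,
        ⟨SY ∪ L, ?_, hY.union_row (hL.trans Finset.sdiff_subset) hcard⟩⟩
      exact Finset.union_subset hSY'
        (hL.trans (Finset.sdiff_subset_sdiff (row_subset_board le_rfl) le_rfl))

/-- The arrow relation `m → (p, q)` of Ramsey theory, for triangular subsets. -/
def TriangleArrows (m p q : ℕ) : Prop :=
  ∀ X : Finset ℕ, X ⊆ board m →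
    (∃ S, IsTriangleOn m p S ∧ S ⊆ X) ∨ (∃ S, IsTriangleOn m q S ∧ S ⊆ board m \ X)

lemma triangleArrows_of_add_le {p q m : ℕ} (hm : p + q ≤ m + 1) : TriangleArrows m p q := by
  intro X _
  obtain ⟨a, b, hab, ⟨SX, hSX, hX⟩, ⟨SY, hSY, hY⟩⟩ := exists_triangles_add_eq m X
  rcases le_or_gt p a with hpa | hpa
  · obtain ⟨S, hS, hp⟩ := hX.exists_subset_of_le hpa
    exact .inl ⟨S, hp, hS.trans hSX⟩
  · obtain ⟨S, hS, hq⟩ := hY.exists_subset_of_le (show q ≤ b by omega)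
    exact .inr ⟨S, hq, hS.trans hSY⟩

lemma max_le_R1_and_triangleArrows {p q : ℕ} (hp : 1 ≤ p) (hq : 1 ≤ q) :
    max p q ≤ R1 p q ∧ TriangleArrows (R1 p q) p q :=
  Nat.sInf_mem (s := {m | max p q ≤ m ∧ TriangleArrows m p q})
    ⟨p + q - 1, by omega, triangleArrows_of_add_le (by omega)⟩

lemma not_triangle_first_rows {p q m : ℕ} (hp : 1 ≤ p) (hq : 1 ≤ q) (hm : m ≤ p + q - 2) :
    ¬(∃ S, IsTriangleOn m p S ∧ S ⊆ board (p - 1)) ∧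
      ¬(∃ S, IsTriangleOn m q S ∧ S ⊆ board m \ board (p - 1)) := by
  refine ⟨fun ⟨S, hS, hSX⟩ => ?_, fun ⟨S, hS, hSY⟩ => ?_⟩
  · have := hS.le_sub_of_subset_Ioc (board_eq_Ioc (p - 1) ▸ hSX)
    omega
  · have := hS.le_sub_of_subset_Ioc (board_sdiff_board m (p - 1) ▸ hSY)
    omega

/-- There is a two-coloring of the board with `p + q - 2` levels in which the first
color contains no `△_p` and the second color contains no `△_q`; hence
`R₁(p, q, 1) > p + q - 2`. -/
theorem R1_lower_bound (p q : ℕ) (hp : 1 ≤ p) (hq : 1 ≤ q) :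
    (∃ X : Finset ℕ, X ⊆ board (p + q - 2) ∧
      ¬(∃ S, IsTriangleOn (p + q - 2) p S ∧ S ⊆ X) ∧
      ¬(∃ S, IsTriangleOn (p + q - 2) q S ∧ S ⊆ board (p + q - 2) \ X)) ∧
    p + q - 2 < R1 p q := by
  refine ⟨⟨board (p - 1), board_mono (by omega), not_triangle_first_rows hp hq le_rfl⟩, ?_⟩
  by_contra! hR
  obtain ⟨hmax, harrows⟩ := max_le_R1_and_triangleArrows hp hq
  obtain ⟨noX, noY⟩ := not_triangle_first_rows hp hq hR
  exact (harrows (board (p - 1)) (board_mono (by omega))).elim noX noY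
end
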